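/- arXiv:1111.0383 — 2 statements merged into one kernel-verified Lean document; each statement's English description precedes it below -/
import Mathlib

section
/- For every point p ∈ ℝ^{2n+1} and every vector w ∈ ℝ^{2n+1}, the interior product of X with the 2-form dβ satisfies dβ(p)(X(p), w) = 2ε⁻²(2r²−1)z·β(p)(w) − (2r⁴−2r²+1)·(fderiv H p)(w), where r² = u² + v². -/
noncomputable section
open scoped BigOperators RealInnerProductSpace

/-- Points of `ℝ^(2n+1)` with the Euclidean structure. -/
abbrev Pt (n : ℕ) : Type := EuclideanSpace ℝ (Fin (2*n+1))

/-- The index of the `u`-coordinate. -/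
def idxU (n : ℕ) : Fin (2*n+1) := ⟨0, by omega⟩
/-- The index of the `v`-coordinate (equal to `1` whenever `n ≥ 1`). -/
def idxV (n : ℕ) : Fin (2*n+1) := ⟨1 % (2*n+1), Nat.mod_lt _ (by omega)⟩
/-- The index of the `z`-coordinate (equal to `2` whenever `n ≥ 1`). -/
def idxZ (n : ℕ) : Fin (2*n+1) := ⟨2 % (2*n+1), Nat.mod_lt _ (by omega)⟩
/-- The index of the `xᵢ`-coordinate, `i = 0, …, n-2`. -/
def idxX {n : ℕ} (i : Fin (n-1)) : Fin (2*n+1) := ⟨3+2*i.val, by have := i.isLt; omega⟩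
/-- The index of the `yᵢ`-coordinate, `i = 0, …, n-2`. -/
def idxY {n : ℕ} (i : Fin (n-1)) : Fin (2*n+1) := ⟨4+2*i.val, by have := i.isLt; omega⟩

/-- The `u`-coordinate. -/
def uu {n : ℕ} (p : Pt n) : ℝ := p (idxU n)
/-- The `v`-coordinate. -/
def vv {n : ℕ} (p : Pt n) : ℝ := p (idxV n)
/-- The `z`-coordinate. -/
def zz {n : ℕ} (p : Pt n) : ℝ := p (idxZ n)
/-- The `xᵢ`-coordinate, `i = 0, …, n-2`. -/
def xx {n : ℕ} (i : Fin (n-1)) (p : Pt n) : ℝ := p (idxX i)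
/-- The `yᵢ`-coordinate, `i = 0, …, n-2`. -/
def yy {n : ℕ} (i : Fin (n-1)) (p : Pt n) : ℝ := p (idxY i)
/-- `r² = u² + v²`. -/
def r2 {n : ℕ} (p : Pt n) : ℝ := uu p ^ 2 + vv p ^ 2

/-- `H(p) = u² + v² + ε⁻²(z² + Σᵢ(xᵢ² + yᵢ²))`; the hypersurface `Σ̃` is `{H = 1+ε}`. -/
def Hfun {n : ℕ} (ε : ℝ) (p : Pt n) : ℝ :=
  r2 p + ε⁻¹ ^ 2 * (zz p ^ 2 + ∑ i : Fin (n-1), (xx i p ^ 2 + yy i p ^ 2))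

/-- `u`-component of the vector field `X`. -/
def Xu {n : ℕ} (ε : ℝ) (p : Pt n) : ℝ :=
  ε⁻¹ ^ 2 * (r2 p - 1) * zz p * uu p - (1 + 2*ε - 2 * ε⁻¹ ^ 2 * zz p ^ 2) * vv p
/-- `v`-component of the vector field `X`. -/
def Xv {n : ℕ} (ε : ℝ) (p : Pt n) : ℝ :=
  ε⁻¹ ^ 2 * (r2 p - 1) * zz p * vv p + (1 + 2*ε - 2 * ε⁻¹ ^ 2 * zz p ^ 2) * uu p
/-- `z`-component of the vector field `X`. -/
def Xz {n : ℕ} (ε : ℝ) (p : Pt n) : ℝ :=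
  (r2 p - 1) ^ 2 + (2 * r2 p - 1) * (ε⁻¹ ^ 2 * zz p ^ 2 - ε)
/-- `xᵢ`-component of the vector field `X`. -/
def Xx {n : ℕ} (ε : ℝ) (i : Fin (n-1)) (p : Pt n) : ℝ :=
  ε⁻¹ ^ 2 * (2 * r2 p - 1) * zz p * xx i p - ε⁻¹ ^ 2 * (2 * r2 p ^ 2 - 2 * r2 p + 1) * yy i p
/-- `yᵢ`-component of the vector field `X`. -/
def Xy {n : ℕ} (ε : ℝ) (i : Fin (n-1)) (p : Pt n) : ℝ :=
  ε⁻¹ ^ 2 * (2 * r2 p - 1) * zz p * yy i p + ε⁻¹ ^ 2 * (2 * r2 p ^ 2 - 2 * r2 p + 1) * xx i p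

/-- The vector field `X` of the paper, assembled from its components. -/
def XV {n : ℕ} (ε : ℝ) (p : Pt n) : Pt n :=
  (EuclideanSpace.single (idxU n) (Xu ε p) : Pt n) +
  (EuclideanSpace.single (idxV n) (Xv ε p) : Pt n) +
  (EuclideanSpace.single (idxZ n) (Xz ε p) : Pt n) +
  ∑ i : Fin (n-1),
    ((EuclideanSpace.single (idxX i) (Xx ε i p) : Pt n) +
     (EuclideanSpace.single (idxY i) (Xy ε i p) : Pt n))

/-- The 1-form `β = (2r²−1)dz + r²(r²−1)dθ + Σᵢ(xᵢ dyᵢ − yᵢ dxᵢ)` evaluated at `p` on `w`. -/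
def βval {n : ℕ} (p w : Pt n) : ℝ :=
  (2 * r2 p - 1) * zz w + (r2 p - 1) * (uu p * vv w - vv p * uu w)
    + ∑ i : Fin (n-1), (xx i p * yy i w - yy i p * xx i w)

/-- The 2-form `dβ = 4r dr∧dz + 2r(2r²−1)dr∧dθ + 2Σᵢ dxᵢ∧dyᵢ` evaluated at `p` on `(a, b)`. -/
def dβval {n : ℕ} (p a b : Pt n) : ℝ :=
  4 * (uu p * uu a + vv p * vv a) * zz b - 4 * (uu p * uu b + vv p * vv b) * zz a
    + 2 * (2 * r2 p - 1) * (uu a * vv b - vv a * uu b)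
    + 2 * ∑ i : Fin (n-1), (xx i a * yy i b - yy i a * xx i b)

/- ===== auxiliary lemmas ===== -/
section Aux

variable {n : ℕ}

lemma sq_hasFDerivAt (j : Fin (2*n+1)) (p : Pt n) :
    HasFDerivAt (fun q : Pt n => q j ^ 2)
      ((2 * p j) • (EuclideanSpace.proj j : Pt n →L[ℝ] ℝ)) p := by
  have h := (EuclideanSpace.proj (𝕜 := ℝ) j).hasFDerivAt (x := p)
  have h2 := h.mul h
  simp only [PiLp.proj_apply] at h2
  have hf : (fun q : Pt n => q j ^ 2) = fun q => q j * q j := by funext q; ring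
  rw [hf, two_mul (p j), add_smul]
  exact h2

lemma pilp_sum_apply {k : ℕ} (f : Fin k → Pt n) (j : Fin (2*n+1)) :
    (∑ i, f i) j = ∑ i, f i j := by
  rw [WithLp.ofLp_sum]; exact Finset.sum_apply j Finset.univ _

lemma fderiv_Hfun (ε : ℝ) (p w : Pt n) :
    fderiv ℝ (Hfun ε : Pt n → ℝ) p w
      = 2 * uu p * uu w + 2 * vv p * vv w
        + ε⁻¹ ^ 2 * (2 * zz p * zz w
            + ∑ i : Fin (n-1), (2 * xx i p * xx i w + 2 * yy i p * yy i w)) := by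
  have hu := sq_hasFDerivAt (idxU n) p
  have hv := sq_hasFDerivAt (idxV n) p
  have hz := sq_hasFDerivAt (idxZ n) p
  have hs : HasFDerivAt
      (fun q : Pt n => q (idxZ n) ^ 2 + ∑ i : Fin (n-1), (q (idxX i) ^ 2 + q (idxY i) ^ 2))
      (((2 * p (idxZ n)) • (EuclideanSpace.proj (idxZ n) : Pt n →L[ℝ] ℝ))
        + ∑ i : Fin (n-1),
            (((2 * p (idxX i)) • (EuclideanSpace.proj (idxX i) : Pt n →L[ℝ] ℝ))
              + ((2 * p (idxY i)) • (EuclideanSpace.proj (idxY i) : Pt n →L[ℝ] ℝ)))) p :=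
    hz.add (HasFDerivAt.fun_sum fun i _ => (sq_hasFDerivAt (idxX i) p).add (sq_hasFDerivAt (idxY i) p))
  have h : HasFDerivAt (Hfun ε : Pt n → ℝ)
      ((((2 * p (idxU n)) • (EuclideanSpace.proj (idxU n) : Pt n →L[ℝ] ℝ))
        + ((2 * p (idxV n)) • (EuclideanSpace.proj (idxV n) : Pt n →L[ℝ] ℝ)))
        + (ε⁻¹ ^ 2) • (((2 * p (idxZ n)) • (EuclideanSpace.proj (idxZ n) : Pt n →L[ℝ] ℝ))
            + ∑ i : Fin (n-1),
                (((2 * p (idxX i)) • (EuclideanSpace.proj (idxX i) : Pt n →L[ℝ] ℝ))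
                  + ((2 * p (idxY i)) • (EuclideanSpace.proj (idxY i) : Pt n →L[ℝ] ℝ))))) p :=
    (hu.add hv).add (hs.const_mul (ε⁻¹ ^ 2))
  rw [h.fderiv]
  simp only [ContinuousLinearMap.add_apply, ContinuousLinearMap.coe_smul', Pi.smul_apply,
    ContinuousLinearMap.coe_sum', Finset.sum_apply, PiLp.proj_apply, smul_eq_mul,
    uu, vv, zz, xx, yy]

lemma idxV_val (hn : 1 ≤ n) : (idxV n).val = 1 := Nat.mod_eq_of_lt (by omega)
lemma idxZ_val (hn : 1 ≤ n) : (idxZ n).val = 2 := Nat.mod_eq_of_lt (by omega)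

lemma uu_XV (hn : 2 ≤ n) (ε : ℝ) (p : Pt n) : uu (XV ε p) = Xu ε p := by
  have hv := idxV_val (n := n) (by omega)
  have hz := idxZ_val (n := n) (by omega)
  have h1 : ¬(idxU n = idxV n) := by simp [Fin.ext_iff, idxU, hv]
  have h2 : ¬(idxU n = idxZ n) := by simp [Fin.ext_iff, idxU, hz]
  have h3 : ∀ i : Fin (n-1), ¬(idxU n = idxX i) := fun i => by
    simp [Fin.ext_iff, idxU, idxX]; try omega
  have h4 : ∀ i : Fin (n-1), ¬(idxU n = idxY i) := fun i => by
    simp [Fin.ext_iff, idxU, idxY]; try omega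
  simp [uu, XV, PiLp.add_apply, pilp_sum_apply, EuclideanSpace.single_apply, h1, h2, h3, h4]

lemma vv_XV (hn : 2 ≤ n) (ε : ℝ) (p : Pt n) : vv (XV ε p) = Xv ε p := by
  have hv := idxV_val (n := n) (by omega)
  have hz := idxZ_val (n := n) (by omega)
  have h1 : ¬(idxV n = idxU n) := by simp [Fin.ext_iff, idxU, hv]
  have h2 : ¬(idxV n = idxZ n) := by simp [Fin.ext_iff, hv, hz]
  have h3 : ∀ i : Fin (n-1), ¬(idxV n = idxX i) := fun i => by
    simp [Fin.ext_iff, hv, idxX]; try omega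
  have h4 : ∀ i : Fin (n-1), ¬(idxV n = idxY i) := fun i => by
    simp [Fin.ext_iff, hv, idxY]; try omega
  simp [vv, XV, PiLp.add_apply, pilp_sum_apply, EuclideanSpace.single_apply, h1, h2, h3, h4]

lemma zz_XV (hn : 2 ≤ n) (ε : ℝ) (p : Pt n) : zz (XV ε p) = Xz ε p := by
  have hv := idxV_val (n := n) (by omega)
  have hz := idxZ_val (n := n) (by omega)
  have h1 : ¬(idxZ n = idxU n) := by simp [Fin.ext_iff, idxU, hz]
  have h2 : ¬(idxZ n = idxV n) := by simp [Fin.ext_iff, hv, hz]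
  have h3 : ∀ i : Fin (n-1), ¬(idxZ n = idxX i) := fun i => by
    simp [Fin.ext_iff, hz, idxX]; try omega
  have h4 : ∀ i : Fin (n-1), ¬(idxZ n = idxY i) := fun i => by
    simp [Fin.ext_iff, hz, idxY]; try omega
  simp [zz, XV, PiLp.add_apply, pilp_sum_apply, EuclideanSpace.single_apply, h1, h2, h3, h4]

lemma xx_XV (hn : 2 ≤ n) (ε : ℝ) (p : Pt n) (j : Fin (n-1)) :
    xx j (XV ε p) = Xx ε j p := by
  have hv := idxV_val (n := n) (by omega)
  have hz := idxZ_val (n := n) (by omega)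
  have h1 : ¬(idxX j = idxU n) := by simp [Fin.ext_iff, idxU, idxX]; try omega
  have h2 : ¬(idxX j = idxV n) := by simp [Fin.ext_iff, hv, idxX]; try omega
  have h3 : ¬(idxX j = idxZ n) := by simp [Fin.ext_iff, hz, idxX]; try omega
  have h4 : ∀ i : Fin (n-1), idxX j = idxX i ↔ j = i := fun i => by
    simp [Fin.ext_iff, idxX]; try omega
  have h5 : ∀ i : Fin (n-1), ¬(idxX j = idxY i) := fun i => by
    simp [Fin.ext_iff, idxX, idxY]; try omega
  simp [xx, XV, PiLp.add_apply, pilp_sum_apply, EuclideanSpace.single_apply,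
    h1, h2, h3, h4, h5, Finset.sum_ite_eq]

lemma yy_XV (hn : 2 ≤ n) (ε : ℝ) (p : Pt n) (j : Fin (n-1)) :
    yy j (XV ε p) = Xy ε j p := by
  have hv := idxV_val (n := n) (by omega)
  have hz := idxZ_val (n := n) (by omega)
  have h1 : ¬(idxY j = idxU n) := by simp [Fin.ext_iff, idxU, idxY]; try omega
  have h2 : ¬(idxY j = idxV n) := by simp [Fin.ext_iff, hv, idxY]; try omega
  have h3 : ¬(idxY j = idxZ n) := by simp [Fin.ext_iff, hz, idxY]; try omega
  have h4 : ∀ i : Fin (n-1), idxY j = idxY i ↔ j = i := fun i => by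
    simp [Fin.ext_iff, idxY]; try omega
  have h5 : ∀ i : Fin (n-1), ¬(idxY j = idxX i) := fun i => by
    simp [Fin.ext_iff, idxX, idxY]; try omega
  simp [yy, XV, PiLp.add_apply, pilp_sum_apply, EuclideanSpace.single_apply,
    h1, h2, h3, h4, h5, Finset.sum_ite_eq]

end Aux

/-- `ι_X dβ = 2ε⁻²(2r²−1)z·β − (2r⁴−2r²+1)·dH` pointwise: for all `p` and `w`,
`dβ(p)(X(p), w) = 2ε⁻²(2r²−1)z·β(p)(w) − (2r⁴−2r²+1)·(fderiv H p)(w)`. -/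
theorem stmt2 (n : ℕ) (hn : 2 ≤ n) (ε : ℝ) (hε : 0 < ε) :
    ∀ p w : Pt n,
      dβval p (XV ε p) w
        = 2 * ε⁻¹ ^ 2 * (2 * r2 p - 1) * zz p * βval p w
          - (2 * r2 p ^ 2 - 2 * r2 p + 1) * (fderiv ℝ (Hfun ε : Pt n → ℝ) p w) := by
  intro p w
  rw [fderiv_Hfun]
  simp only [dβval, βval, uu_XV hn, vv_XV hn, zz_XV hn, xx_XV hn, yy_XV hn]
  have hsum : (2:ℝ) * ∑ i : Fin (n-1), (Xx ε i p * yy i w - Xy ε i p * xx i w)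
      = 2 * ε⁻¹ ^ 2 * (2 * r2 p - 1) * zz p
            * ∑ i : Fin (n-1), (xx i p * yy i w - yy i p * xx i w)
        - (2 * r2 p ^ 2 - 2 * r2 p + 1)
            * (ε⁻¹ ^ 2 * ∑ i : Fin (n-1), (2 * xx i p * xx i w + 2 * yy i p * yy i w)) := by
    rw [Finset.mul_sum, Finset.mul_sum, Finset.mul_sum, Finset.mul_sum,
      ← Finset.sum_sub_distrib]
    exact Finset.sum_congr rfl fun i _ => by simp only [Xx, Xy]; ring
  rw [hsum]
  simp only [Xu, Xv, Xz, r2]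
  ring
end
end

section
/- Classification of the singular points of the characteristic foliation: for every point p ∈ ℝ^{2n+1} with H(p) = 1 + ε, one has X(p) = 0 if and only if p = (0, 0, ε√(1+ε), 0, …, 0) or p = (0, 0, −ε√(1+ε), 0, …, 0). In particular the singularity of X on Σ̃ = {H = 1+ε} consists of exactly two points. -/
noncomputable section
open scoped BigOperators RealInnerProductSpace

section Aux
variable {n : ℕ}

lemma XV_apply (ε : ℝ) (p : Pt n) (j : Fin (2*n+1)) :
    XV ε p j = (if j = idxU n then Xu ε p else 0) + (if j = idxV n then Xv ε p else 0)
      + (if j = idxZ n then Xz ε p else 0)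
      + ∑ i : Fin (n-1), ((if j = idxX i then Xx ε i p else 0)
          + (if j = idxY i then Xy ε i p else 0)) := by
  have hs : (∑ i : Fin (n-1), ((EuclideanSpace.single (idxX i) (Xx ε i p) : Pt n)
      + (EuclideanSpace.single (idxY i) (Xy ε i p) : Pt n))) j
      = ∑ i : Fin (n-1), (((EuclideanSpace.single (idxX i) (Xx ε i p) : Pt n) j)
        + ((EuclideanSpace.single (idxY i) (Xy ε i p) : Pt n) j)) := by
    simp only [WithLp.ofLp_sum, Finset.sum_apply, PiLp.add_apply]
  simp [XV, EuclideanSpace.single_apply, hs]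

lemma idx_cases (hn : 1 ≤ n) (j : Fin (2*n+1)) :
    j = idxU n ∨ j = idxV n ∨ j = idxZ n ∨ (∃ i, j = idxX i) ∨ (∃ i, j = idxY i) := by
  have hj := j.isLt
  have h1 : 1 % (2*n+1) = 1 := Nat.mod_eq_of_lt (by omega)
  have h2 : 2 % (2*n+1) = 2 := Nat.mod_eq_of_lt (by omega)
  rcases Nat.lt_or_ge j.val 3 with h | h
  · interval_cases hv : j.val
    · exact Or.inl (by simp [idxU, Fin.ext_iff, hv])
    · exact Or.inr (Or.inl (by simp [idxV, Fin.ext_iff, hv, h1]))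
    · exact Or.inr (Or.inr (Or.inl (by simp [idxZ, Fin.ext_iff, hv, h2])))
  · rcases Nat.even_or_odd j.val with he | ho
    · rcases he with ⟨k, hk⟩
      refine Or.inr (Or.inr (Or.inr (Or.inr ⟨⟨(j.val - 4)/2, by omega⟩, ?_⟩)))
      simp [idxY, Fin.ext_iff]; omega
    · rcases ho with ⟨k, hk⟩
      refine Or.inr (Or.inr (Or.inr (Or.inl ⟨⟨(j.val - 3)/2, by omega⟩, ?_⟩)))
      simp [idxX, Fin.ext_iff]; omega

variable (hn : 1 ≤ n)
include hn

lemma neUV : idxU n ≠ idxV n := by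
  have h1 : 1 % (2*n+1) = 1 := Nat.mod_eq_of_lt (by omega)
  simp [idxU, idxV, Fin.ext_iff, h1]
lemma neUZ : idxU n ≠ idxZ n := by
  have h2 : 2 % (2*n+1) = 2 := Nat.mod_eq_of_lt (by omega)
  simp [idxU, idxZ, Fin.ext_iff, h2]
lemma neVZ : idxV n ≠ idxZ n := by
  have h1 : 1 % (2*n+1) = 1 := Nat.mod_eq_of_lt (by omega)
  have h2 : 2 % (2*n+1) = 2 := Nat.mod_eq_of_lt (by omega)
  simp [idxV, idxZ, Fin.ext_iff, h1, h2]
lemma neUX (i : Fin (n-1)) : idxU n ≠ idxX i := by simp [idxU, idxX, Fin.ext_iff]; omega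
lemma neUY (i : Fin (n-1)) : idxU n ≠ idxY i := by simp [idxU, idxY, Fin.ext_iff]; omega
lemma neVX (i : Fin (n-1)) : idxV n ≠ idxX i := by
  have h1 : 1 % (2*n+1) = 1 := Nat.mod_eq_of_lt (by omega)
  simp [idxV, idxX, Fin.ext_iff, h1]; omega
lemma neVY (i : Fin (n-1)) : idxV n ≠ idxY i := by
  have h1 : 1 % (2*n+1) = 1 := Nat.mod_eq_of_lt (by omega)
  simp [idxV, idxY, Fin.ext_iff, h1]; omega
lemma neZX (i : Fin (n-1)) : idxZ n ≠ idxX i := by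
  have h2 : 2 % (2*n+1) = 2 := Nat.mod_eq_of_lt (by omega)
  simp [idxZ, idxX, Fin.ext_iff, h2]; omega
lemma neZY (i : Fin (n-1)) : idxZ n ≠ idxY i := by
  have h2 : 2 % (2*n+1) = 2 := Nat.mod_eq_of_lt (by omega)
  simp [idxZ, idxY, Fin.ext_iff, h2]; omega

omit hn

lemma neXY (i k : Fin (n-1)) : idxX i ≠ idxY k := by
  simp [idxX, idxY, Fin.ext_iff]; omega
lemma idxX_inj {i k : Fin (n-1)} (h : idxX i = idxX k) : i = k := by
  simp [idxX, Fin.ext_iff] at h ⊢; omega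
lemma idxY_inj {i k : Fin (n-1)} (h : idxY i = idxY k) : i = k := by
  simp [idxY, Fin.ext_iff] at h ⊢; omega

include hn

lemma XV_u (ε : ℝ) (p : Pt n) : XV ε p (idxU n) = Xu ε p := by
  rw [XV_apply, if_pos rfl, if_neg (neUV hn), if_neg (neUZ hn),
    Finset.sum_eq_zero (fun i _ => by
      rw [if_neg (neUX hn i), if_neg (neUY hn i), add_zero])]
  ring

lemma XV_v (ε : ℝ) (p : Pt n) : XV ε p (idxV n) = Xv ε p := by
  rw [XV_apply, if_pos rfl, if_neg (Ne.symm (neUV hn)), if_neg (neVZ hn),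
    Finset.sum_eq_zero (fun i _ => by
      rw [if_neg (neVX hn i), if_neg (neVY hn i), add_zero])]
  ring

lemma XV_z (ε : ℝ) (p : Pt n) : XV ε p (idxZ n) = Xz ε p := by
  rw [XV_apply, if_pos rfl, if_neg (Ne.symm (neUZ hn)), if_neg (Ne.symm (neVZ hn)),
    Finset.sum_eq_zero (fun i _ => by
      rw [if_neg (neZX hn i), if_neg (neZY hn i), add_zero])]
  ring

lemma XV_x (ε : ℝ) (i : Fin (n-1)) (p : Pt n) : XV ε p (idxX i) = Xx ε i p := by
  rw [XV_apply, if_neg (Ne.symm (neUX hn i)), if_neg (Ne.symm (neVX hn i)),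
    if_neg (Ne.symm (neZX hn i)),
    Finset.sum_eq_single i (fun k _ hki => by
      rw [if_neg (fun h => hki (idxX_inj h).symm), if_neg (neXY i k), add_zero])
      (by simp)]
  rw [if_pos rfl, if_neg (neXY i i)]
  ring

lemma XV_y (ε : ℝ) (i : Fin (n-1)) (p : Pt n) : XV ε p (idxY i) = Xy ε i p := by
  rw [XV_apply, if_neg (Ne.symm (neUY hn i)), if_neg (Ne.symm (neVY hn i)),
    if_neg (Ne.symm (neZY hn i)),
    Finset.sum_eq_single i (fun k _ hki => by
      rw [if_neg (Ne.symm (neXY k i)), if_neg (fun h => hki (idxY_inj h).symm), add_zero])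
      (by simp)]
  rw [if_neg (Ne.symm (neXY i i)), if_pos rfl]
  ring

-- coordinates of a `z`-axis point
lemma coord_single_u (a : ℝ) : uu (EuclideanSpace.single (idxZ n) a : Pt n) = 0 := by
  rw [uu, EuclideanSpace.single_apply, if_neg (neUZ hn)]
lemma coord_single_v (a : ℝ) : vv (EuclideanSpace.single (idxZ n) a : Pt n) = 0 := by
  rw [vv, EuclideanSpace.single_apply, if_neg (neVZ hn)]
omit hn in
lemma coord_single_z (a : ℝ) : zz (EuclideanSpace.single (idxZ n) a : Pt n) = a := by
  rw [zz, EuclideanSpace.single_apply, if_pos rfl]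
lemma coord_single_x (a : ℝ) (i : Fin (n-1)) :
    xx i (EuclideanSpace.single (idxZ n) a : Pt n) = 0 := by
  rw [xx, EuclideanSpace.single_apply, if_neg (Ne.symm (neZX hn i))]
lemma coord_single_y (a : ℝ) (i : Fin (n-1)) :
    yy i (EuclideanSpace.single (idxZ n) a : Pt n) = 0 := by
  rw [yy, EuclideanSpace.single_apply, if_neg (Ne.symm (neZY hn i))]

end Aux

set_option maxHeartbeats 1000000

/-- Classification of the singular points of the characteristic foliation:
on `Σ̃ = {H = 1+ε}`, `X(p) = 0` iff `p = (0,0,±ε√(1+ε),0,…,0)`. In particular the singularity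
of `X` on `Σ̃` consists of exactly two points. -/

theorem stmt7 (n : ℕ) (hn : 2 ≤ n) (ε : ℝ) (hε : 0 < ε)
    (pP pM : Pt n)
    (hP : pP = (EuclideanSpace.single (idxZ n) (ε * Real.sqrt (1+ε)) : Pt n))
    (hM : pM = (EuclideanSpace.single (idxZ n) (-(ε * Real.sqrt (1+ε))) : Pt n)) :
    (∀ p : Pt n, Hfun ε p = 1 + ε → (XV ε p = 0 ↔ p = pP ∨ p = pM)) ∧
    Hfun ε pP = 1 + ε ∧ Hfun ε pM = 1 + ε ∧ pP ≠ pM := by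
  have hn1 : 1 ≤ n := by omega
  have hε' : ε ≠ 0 := ne_of_gt hε
  have hinv : ε⁻¹ ^ 2 * ε ^ 2 = 1 := by field_simp
  have hinvpos : 0 < ε⁻¹ ^ 2 := by positivity
  set c : ℝ := ε * Real.sqrt (1+ε) with hc
  have hc2 : c ^ 2 = ε ^ 2 * (1 + ε) := by
    rw [hc, mul_pow, Real.sq_sqrt (by linarith)]
  have hcpos : 0 < c := mul_pos hε (Real.sqrt_pos.mpr (by linarith))
  have hH : ∀ a : ℝ, a ^ 2 = ε ^ 2 * (1 + ε) →
      Hfun ε (EuclideanSpace.single (idxZ n) a : Pt n) = 1 + ε := by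
    intro a ha
    rw [Hfun, r2, coord_single_u hn1, coord_single_v hn1, coord_single_z,
      Finset.sum_eq_zero (fun i _ => by
        rw [coord_single_x hn1 a i, coord_single_y hn1 a i]; ring)]
    rw [ha]
    field_simp
    ring
  have hXV0 : ∀ a : ℝ, a ^ 2 = ε ^ 2 * (1 + ε) →
      XV ε (EuclideanSpace.single (idxZ n) a : Pt n) = 0 := by
    intro a ha
    set q : Pt n := (EuclideanSpace.single (idxZ n) a : Pt n) with hq
    have hr : r2 q = 0 := by rw [r2, coord_single_u hn1, coord_single_v hn1]; ring
    have hXu : Xu ε q = 0 := by rw [Xu, coord_single_u hn1, coord_single_v hn1]; ring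
    have hXv : Xv ε q = 0 := by rw [Xv, coord_single_u hn1, coord_single_v hn1]; ring
    have hXz : Xz ε q = 0 := by
      rw [Xz, hr, coord_single_z]
      have h1 : ε⁻¹ ^ 2 * a ^ 2 = 1 + ε := by rw [ha, ← mul_assoc, hinv]; ring
      rw [h1]; ring
    have hXx : ∀ i, Xx ε i q = 0 := fun i => by
      rw [Xx, coord_single_x hn1 a i, coord_single_y hn1 a i]; ring
    have hXy : ∀ i, Xy ε i q = 0 := fun i => by
      rw [Xy, coord_single_x hn1 a i, coord_single_y hn1 a i]; ring
    ext j
    rw [XV_apply, hXu, hXv, hXz, Finset.sum_eq_zero (fun i _ => by simp [hXx i, hXy i])]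
    simp
  have hneg2 : (-c) ^ 2 = ε ^ 2 * (1 + ε) := by rw [neg_pow]; simp [hc2]
  refine ⟨?_, by rw [hP]; exact hH c hc2, by rw [hM]; exact hH _ hneg2, ?_⟩
  · intro p hHp
    constructor
    · intro h0
      have happ : ∀ j, XV ε p j = 0 := fun j => by rw [h0]; rfl
      have hXu : Xu ε p = 0 := by rw [← XV_u hn1]; exact happ _
      have hXv : Xv ε p = 0 := by rw [← XV_v hn1]; exact happ _
      have hXz : Xz ε p = 0 := by rw [← XV_z hn1]; exact happ _
      have hXx : ∀ i, Xx ε i p = 0 := fun i => by rw [← XV_x hn1]; exact happ _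
      have hXy : ∀ i, Xy ε i p = 0 := fun i => by rw [← XV_y hn1]; exact happ _
      rw [Xu] at hXu; rw [Xv] at hXv; rw [Xz] at hXz
      -- xᵢ = yᵢ = 0
      have hBpos : 0 < ε⁻¹ ^ 2 * (2 * r2 p ^ 2 - 2 * r2 p + 1) := by
        have h' : 0 < 2 * r2 p ^ 2 - 2 * r2 p + 1 := by nlinarith [sq_nonneg (2 * r2 p - 1)]
        exact mul_pos hinvpos h'
      have hsum : 0 < (ε⁻¹ ^ 2 * (2 * r2 p - 1) * zz p) ^ 2
          + (ε⁻¹ ^ 2 * (2 * r2 p ^ 2 - 2 * r2 p + 1)) ^ 2 := by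
        have := sq_nonneg (ε⁻¹ ^ 2 * (2 * r2 p - 1) * zz p)
        have := pow_pos hBpos 2
        linarith
      have hx0 : ∀ i, xx i p = 0 := by
        intro i
        have e1 := hXx i; rw [Xx] at e1
        have e2 := hXy i; rw [Xy] at e2
        have h5 : ((ε⁻¹ ^ 2 * (2 * r2 p - 1) * zz p) ^ 2
            + (ε⁻¹ ^ 2 * (2 * r2 p ^ 2 - 2 * r2 p + 1)) ^ 2) * xx i p = 0 := by
          linear_combination (ε⁻¹ ^ 2 * (2 * r2 p - 1) * zz p) * e1
            + (ε⁻¹ ^ 2 * (2 * r2 p ^ 2 - 2 * r2 p + 1)) * e2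
        rcases mul_eq_zero.mp h5 with h | h
        · exact absurd h (ne_of_gt hsum)
        · exact h
      have hy0 : ∀ i, yy i p = 0 := by
        intro i
        have e1 := hXx i; rw [Xx] at e1
        have e2 := hXy i; rw [Xy] at e2
        have h5 : ((ε⁻¹ ^ 2 * (2 * r2 p - 1) * zz p) ^ 2
            + (ε⁻¹ ^ 2 * (2 * r2 p ^ 2 - 2 * r2 p + 1)) ^ 2) * yy i p = 0 := by
          linear_combination (ε⁻¹ ^ 2 * (2 * r2 p - 1) * zz p) * e2
            - (ε⁻¹ ^ 2 * (2 * r2 p ^ 2 - 2 * r2 p + 1)) * e1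
        rcases mul_eq_zero.mp h5 with h | h
        · exact absurd h (ne_of_gt hsum)
        · exact h
      have hS : ∑ i : Fin (n-1), (xx i p ^ 2 + yy i p ^ 2) = 0 :=
        Finset.sum_eq_zero (fun i _ => by rw [hx0 i, hy0 i]; ring)
      have hHp' : r2 p + ε⁻¹ ^ 2 * zz p ^ 2 = 1 + ε := by
        rw [Hfun, hS] at hHp; linear_combination hHp
      -- u = v = 0
      have huv0 : uu p = 0 ∧ vv p = 0 := by
        by_cases hCD : (ε⁻¹ ^ 2 * (r2 p - 1) * zz p) ^ 2
            + (1 + 2*ε - 2 * ε⁻¹ ^ 2 * zz p ^ 2) ^ 2 = 0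
        · exfalso
          have hC0 : ε⁻¹ ^ 2 * (r2 p - 1) * zz p = 0 := by
            have h2 : (ε⁻¹ ^ 2 * (r2 p - 1) * zz p) ^ 2 = 0 := by
              have := sq_nonneg (ε⁻¹ ^ 2 * (r2 p - 1) * zz p)
              have := sq_nonneg (1 + 2*ε - 2 * ε⁻¹ ^ 2 * zz p ^ 2)
              linarith
            exact (pow_eq_zero_iff two_ne_zero).mp h2
          have hD0 : 1 + 2*ε - 2 * ε⁻¹ ^ 2 * zz p ^ 2 = 0 := by
            have h2 : (1 + 2*ε - 2 * ε⁻¹ ^ 2 * zz p ^ 2) ^ 2 = 0 := by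
              have := sq_nonneg (ε⁻¹ ^ 2 * (r2 p - 1) * zz p)
              have := sq_nonneg (1 + 2*ε - 2 * ε⁻¹ ^ 2 * zz p ^ 2)
              linarith
            exact (pow_eq_zero_iff two_ne_zero).mp h2
          have hzne : zz p ≠ 0 := by
            intro h; rw [h] at hD0; simp at hD0; linarith
          have hr1 : r2 p = 1 := by
            rcases mul_eq_zero.mp hC0 with h | h
            · rcases mul_eq_zero.mp h with h' | h'
              · exact absurd h' (ne_of_gt hinvpos)
              · linarith
            · exact absurd h hzne
          rw [hr1] at hHp'
          linarith
        · have huv : ((ε⁻¹ ^ 2 * (r2 p - 1) * zz p) ^ 2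
              + (1 + 2*ε - 2 * ε⁻¹ ^ 2 * zz p ^ 2) ^ 2) * uu p = 0 := by
            linear_combination (ε⁻¹ ^ 2 * (r2 p - 1) * zz p) * hXu
              + (1 + 2*ε - 2 * ε⁻¹ ^ 2 * zz p ^ 2) * hXv
          have hvv : ((ε⁻¹ ^ 2 * (r2 p - 1) * zz p) ^ 2
              + (1 + 2*ε - 2 * ε⁻¹ ^ 2 * zz p ^ 2) ^ 2) * vv p = 0 := by
            linear_combination (ε⁻¹ ^ 2 * (r2 p - 1) * zz p) * hXv
              - (1 + 2*ε - 2 * ε⁻¹ ^ 2 * zz p ^ 2) * hXu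
          constructor
          · rcases mul_eq_zero.mp huv with h | h
            · exact absurd h hCD
            · exact h
          · rcases mul_eq_zero.mp hvv with h | h
            · exact absurd h hCD
            · exact h
      have hr0 : r2 p = 0 := by rw [r2, huv0.1, huv0.2]; ring
      have hz2 : zz p ^ 2 = c ^ 2 := by
        rw [hr0] at hXz
        have ht : ε⁻¹ ^ 2 * zz p ^ 2 = 1 + ε := by linear_combination -hXz
        calc zz p ^ 2 = ε⁻¹ ^ 2 * ε ^ 2 * zz p ^ 2 := by rw [hinv]; ring
          _ = ε ^ 2 * (ε⁻¹ ^ 2 * zz p ^ 2) := by ring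
          _ = ε ^ 2 * (1 + ε) := by rw [ht]
          _ = c ^ 2 := hc2.symm
      have hcase : zz p = c ∨ zz p = -c := by
        have h : (zz p - c) * (zz p + c) = 0 := by linear_combination hz2
        rcases mul_eq_zero.mp h with h | h
        · left; linarith
        · right; linarith
      have hcoord : ∀ (a : ℝ), zz p = a →
          p = (EuclideanSpace.single (idxZ n) a : Pt n) := by
        intro a haz
        ext j
        rcases idx_cases hn1 j with h | h | h | ⟨i, h⟩ | ⟨i, h⟩ <;> subst h
        · rw [EuclideanSpace.single_apply, if_neg (neUZ hn1)]; exact huv0.1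
        · rw [EuclideanSpace.single_apply, if_neg (neVZ hn1)]; exact huv0.2
        · rw [EuclideanSpace.single_apply, if_pos rfl]; exact haz
        · rw [EuclideanSpace.single_apply, if_neg (Ne.symm (neZX hn1 i))]; exact hx0 i
        · rw [EuclideanSpace.single_apply, if_neg (Ne.symm (neZY hn1 i))]; exact hy0 i
      rcases hcase with h | h
      · exact Or.inl (by rw [hP]; exact hcoord c h)
      · exact Or.inr (by rw [hM]; exact hcoord (-c) h)
    · rintro (rfl | rfl)
      · rw [hP]; exact hXV0 c hc2
      · rw [hM]; exact hXV0 _ hneg2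
  · intro h
    rw [hP, hM] at h
    have h2 := congrArg (zz (n := n)) h
    rw [coord_single_z, coord_single_z] at h2
    linarith
end
end
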